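/- arXiv:1611.03790 — 2 statements merged into one kernel-verified Lean document; each statement's English description precedes it below -/
import Mathlib

section
/- Let C be a CSS code with K ≥ 1 and let C̃ be its thickened code with parameter l ≥ 2 and any choice function κ. Then the Z-distance is unchanged: d̃_Z = d_Z. -/
open Matrix

/-- The weight of a vector over `F₂`: the number of nonzero entries. -/
def wt {α : Type*} [Fintype α] (v : α → ZMod 2) : ℕ :=
  (Finset.univ.filter fun j => v j ≠ 0).card

/-- Maximum weight of a row of a matrix over `F₂`. -/
def maxRowW {m α : Type*} [Fintype m] [Fintype α] (M : Matrix m α (ZMod 2)) : ℕ :=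
  Finset.univ.sup fun i => wt (M i)

/-- Maximum weight of a column of a matrix over `F₂`. -/
def maxColW {m α : Type*} [Fintype m] [Fintype α] (M : Matrix m α (ZMod 2)) : ℕ :=
  Finset.univ.sup fun j => wt fun i => M i j

/-- Total number of nonzero entries of a matrix over `F₂`. -/
def totW {m α : Type*} [Fintype m] [Fintype α] (M : Matrix m α (ZMod 2)) : ℕ :=
  ∑ i, wt (M i)

variable {N nX nZ : ℕ}

/-- Qubits of the thickened code: qubits `(q,k)` for `q` a qubit of `C` and `k ∈ {1,…,l}`
(0-indexed below), together with qubits `[s,k]` for `s` a row of `H_X` and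
`k ∈ {1,…,l−1}`. -/
abbrev TQubit (N nX l : ℕ) : Type := (Fin N × Fin l) ⊕ (Fin nX × Fin (l - 1))

/-- Row index type of the Z-type generator matrix of the thickened code: one generator for
each row of `H_Z` (type (i)), and one for each pair of a qubit `q` of `C` and
`k ∈ {1,…,l−1}` (type (ii)). -/
abbrev TZIdx (N nZ l : ℕ) : Type := Fin nZ ⊕ (Fin N × Fin (l - 1))

/-- X-type generator matrix of the thickened code: for each row `s` of `HX` with support
`{q₁,…,q_w}` and each `k ∈ {1,…,l}` (0-indexed here), one generator with support
`{(q₁,k),…,(q_w,k)} ∪ {[s,k−1],[s,k]}` (with `[s,0]`, `[s,l]` omitted at the ends). -/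
def thickHX (HX : Matrix (Fin nX) (Fin N) (ZMod 2)) (l : ℕ) :
    Matrix (Fin nX × Fin l) (TQubit N nX l) (ZMod 2) := fun s j =>
  match s, j with
  | (s, k), Sum.inl (p, k') => if k' = k then HX s p else 0
  | (s, k), Sum.inr (s', k') =>
      if s' = s ∧ ((k'.val = k.val) ∨ (k'.val + 1 = k.val)) then 1 else 0

/-- Z-type generator matrix of the thickened code with choice function `κ`:
(i) for each row `r` of `HZ` with support `{q₁,…,q_w}`, one generator with support
`{(q₁,κ(r)),…,(q_w,κ(r))}`; (ii) for each qubit `q` of `C` and each `k ∈ {1,…,l−1}`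
(0-indexed here), one generator with support
`{(q,k),(q,k+1)} ∪ {[s,k] : row s of HX acts on q}`. -/
def thickHZ (HX : Matrix (Fin nX) (Fin N) (ZMod 2)) (HZ : Matrix (Fin nZ) (Fin N) (ZMod 2))
    (l : ℕ) (κ : Fin nZ → Fin l) :
    Matrix (TZIdx N nZ l) (TQubit N nX l) (ZMod 2) := fun r j =>
  match r, j with
  | Sum.inl R, Sum.inl (p, k) => if k = κ R then HZ R p else 0
  | Sum.inl _, Sum.inr _ => 0
  | Sum.inr (p, k), Sum.inl (p', k') =>
      if p' = p ∧ ((k'.val = k.val) ∨ (k'.val = k.val + 1)) then 1 else 0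
  | Sum.inr (p, k), Sum.inr (s, k') => if k'.val = k.val then HX s p else 0

/-- `distX HX HZ` is the X-distance of the CSS code with generator matrices `HX`, `HZ`:
the minimum weight of a vector in `ker(HZ)` not lying in the row space of `HX`. -/
noncomputable def distX {mX mZ α : Type*} [Fintype mX] [Fintype mZ] [Fintype α]
    (HX : Matrix mX α (ZMod 2)) (HZ : Matrix mZ α (ZMod 2)) : ℕ :=
  sInf {k | ∃ v : α → ZMod 2, HZ.mulVec v = 0 ∧
    v ∉ Submodule.span (ZMod 2) (Set.range HX) ∧ wt v = k}

/-- `distZ HX HZ` is the Z-distance of the CSS code with generator matrices `HX`, `HZ`: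
the minimum weight of a vector in `ker(HX)` not lying in the row space of `HZ`. -/
noncomputable def distZ {mX mZ α : Type*} [Fintype mX] [Fintype mZ] [Fintype α]
    (HX : Matrix mX α (ZMod 2)) (HZ : Matrix mZ α (ZMod 2)) : ℕ :=
  sInf {k | ∃ v : α → ZMod 2, HX.mulVec v = 0 ∧
    v ∉ Submodule.span (ZMod 2) (Set.range HZ) ∧ wt v = k}

/-!
Collapsing the `l` layers, `w ↦ ∑ₖ w(·, k)`, sends a Z-logical of the thickened code to one of `C`
of no larger weight, and copying a vector of `C` onto a single layer sends Z-logicals to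
Z-logicals of the same weight. The substance is that collapsing reflects the row spaces: a thick
vector `w` in `ker H̃_X` differs from the copy of its collapse on layer 0 by a combination of
type (ii) generators, whose coefficients are the sums of `w` over the layers above each bridge;
the bridge coordinates match because the X-checks above a bridge telescope. Applied to the copy of
a row `r` of `H_Z` on layer `κ(r)`, which lies in `ker H̃_X` because `H_X H_Zᵀ = 0`, this moves
every type (i) generator to layer 0.
-/

lemma Nat.sInf_eq_sInf_of_forall_exists_le {S T : Set ℕ} (hST : ∀ a ∈ S, ∃ b ∈ T, b ≤ a)
    (hTS : ∀ b ∈ T, ∃ a ∈ S, a ≤ b) : sInf S = sInf T := by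
  have key : ∀ {S T : Set ℕ}, (∀ a ∈ S, ∃ b ∈ T, b ≤ a) → S.Nonempty → sInf T ≤ sInf S := by
    intro S T h hS
    obtain ⟨b, hb, hba⟩ := h _ (Nat.sInf_mem hS)
    exact (Nat.sInf_le hb).trans hba
  rcases S.eq_empty_or_nonempty with rfl | hS
  · have hT : T = ∅ := Set.eq_empty_of_forall_notMem fun b hb => by
      obtain ⟨a, ha, -⟩ := hTS b hb
      exact ha
    rw [hT]
  · obtain ⟨b, hb, -⟩ := hST _ hS.some_mem
    exact le_antisymm (key hTS ⟨b, hb⟩) (key hST hS)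

lemma Matrix.vecMul_mem_span_range {R m n : Type*} [CommSemiring R] [Fintype m]
    (M : Matrix m n R) (c : m → R) : c ᵥ* M ∈ Submodule.span R (Set.range M) := by
  rw [vecMul_eq_sum]
  exact Submodule.sum_mem _ fun i _ => Submodule.smul_mem _ _ (Submodule.subset_span ⟨i, rfl⟩)

lemma distZ_eq_of_forall_exists {mX mZ α mX' mZ' β : Type*} [Fintype mX] [Fintype mZ]
    [Fintype α] [Fintype mX'] [Fintype mZ'] [Fintype β]
    {HX : Matrix mX α (ZMod 2)} {HZ : Matrix mZ α (ZMod 2)}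
    {HX' : Matrix mX' β (ZMod 2)} {HZ' : Matrix mZ' β (ZMod 2)}
    (h : ∀ v, HX *ᵥ v = 0 → v ∉ Submodule.span (ZMod 2) (Set.range HZ) →
      ∃ v', HX' *ᵥ v' = 0 ∧ v' ∉ Submodule.span (ZMod 2) (Set.range HZ') ∧ wt v' ≤ wt v)
    (h' : ∀ v', HX' *ᵥ v' = 0 → v' ∉ Submodule.span (ZMod 2) (Set.range HZ') →
      ∃ v, HX *ᵥ v = 0 ∧ v ∉ Submodule.span (ZMod 2) (Set.range HZ) ∧ wt v ≤ wt v') :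
    distZ HX HZ = distZ HX' HZ' := by
  apply Nat.sInf_eq_sInf_of_forall_exists_le
  · rintro _ ⟨v, hv, hspan, rfl⟩
    obtain ⟨v', hv', hspan', hwt⟩ := h v hv hspan
    exact ⟨_, ⟨v', hv', hspan', rfl⟩, hwt⟩
  · rintro _ ⟨v', hv', hspan', rfl⟩
    obtain ⟨v, hv, hspan, hwt⟩ := h' v' hv' hspan'
    exact ⟨_, ⟨v, hv, hspan, rfl⟩, hwt⟩

namespace Thickening

variable {l : ℕ}

def layer (w : TQubit N nX l → ZMod 2) (n : ℕ) : Fin N → ZMod 2 :=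
  fun p => if h : n < l then w (.inl (p, ⟨n, h⟩)) else 0

/-- `bridge w n` collects the qubits `[s, n - 1]` joining layers `n - 1` and `n` (0-indexed);
it vanishes for `n = 0` and `n ≥ l`, so that the checks on layer `n` read off
`bridge w n + bridge w (n + 1)` with no boundary cases. -/
def bridge (w : TQubit N nX l → ZMod 2) (n : ℕ) : Fin nX → ZMod 2 :=
  fun s => if h : 0 < n ∧ n < l then w (.inr (s, ⟨n - 1, by omega⟩)) else 0

def upper (w : TQubit N nX l → ZMod 2) (n : ℕ) : Fin N → ZMod 2 :=
  ∑ i ∈ Finset.Ico n l, layer w i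

def collapse : (TQubit N nX l → ZMod 2) →ₗ[ZMod 2] (Fin N → ZMod 2) :=
  ∑ k : Fin l, LinearMap.funLeft (ZMod 2) (ZMod 2) fun p => .inl (p, k)

def embed (k : Fin l) : (Fin N → ZMod 2) →ₗ[ZMod 2] (TQubit N nX l → ZMod 2) where
  toFun v
    | .inl (p, k') => if k' = k then v p else 0
    | .inr _ => 0
  map_add' v v' := by
    funext j
    rcases j with ⟨p, k'⟩ | _ <;> simp [ite_add_ite]
  map_smul' c v := by
    funext j
    rcases j with ⟨p, k'⟩ | _ <;> simp

lemma collapse_apply (w : TQubit N nX l → ZMod 2) (p : Fin N) :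
    collapse w p = ∑ k : Fin l, w (.inl (p, k)) := by
  simp [collapse, LinearMap.funLeft_apply]

lemma collapse_embed (k : Fin l) (v : Fin N → ZMod 2) : collapse (embed (nX := nX) k v) = v := by
  funext p
  simp [collapse_apply, embed]

lemma wt_embed (k : Fin l) (v : Fin N → ZMod 2) : wt (embed (nX := nX) k v) = wt v := by
  have hsupp : (Finset.univ.filter fun j => embed (nX := nX) k v j ≠ 0) =
      (Finset.univ.filter fun p => v p ≠ 0).image fun p => Sum.inl (p, k) := by
    ext j
    simp only [Finset.mem_filter, Finset.mem_univ, true_and, Finset.mem_image]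
    rcases j with ⟨p, k'⟩ | _
    · by_cases hk : k' = k
      · subst hk
        simp [embed]
      · simp [embed, hk, Ne.symm hk]
    · simp [embed]
  rw [wt, hsupp, Finset.card_image_of_injective _ fun p q h => by simpa using h, wt]

lemma wt_collapse_le (w : TQubit N nX l → ZMod 2) : wt (collapse w) ≤ wt w := by
  set S := Finset.univ.filter fun x : Fin N × Fin l => w (.inl x) ≠ 0
  calc wt (collapse w) ≤ (S.image Prod.fst).card := by
        apply Finset.card_le_card
        intro q hq
        simp only [Finset.mem_filter, Finset.mem_univ, true_and, collapse_apply] at hq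
        obtain ⟨k, -, hk⟩ := Finset.exists_ne_zero_of_sum_ne_zero hq
        exact Finset.mem_image.mpr ⟨(q, k), by simpa [S] using hk, rfl⟩
    _ ≤ S.card := Finset.card_image_le
    _ = (S.map ⟨Sum.inl, Sum.inl_injective⟩).card := (Finset.card_map _).symm
    _ ≤ wt w := by
        apply Finset.card_le_card
        intro j hj
        obtain ⟨x, hx, rfl⟩ := Finset.mem_map.mp hj
        simpa [S] using hx

lemma upper_zero (w : TQubit N nX l → ZMod 2) : upper w 0 = collapse w := by
  funext p
  simp [upper, layer, collapse_apply, Finset.sum_apply,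
    ← Fin.sum_univ_eq_sum_range (fun i => if h : i < l then w (.inl (p, ⟨i, h⟩)) else 0)]

lemma upper_eq_layer_add (w : TQubit N nX l → ZMod 2) (n : ℕ) :
    upper w n = layer w n + upper w (n + 1) := by
  by_cases hn : n < l
  · exact Finset.sum_eq_sum_Ico_succ_bot hn _
  · have hlayer : layer w n = 0 := funext fun p => dif_neg hn
    simp [upper, hlayer, Finset.Ico_eq_empty_of_le (not_lt.mp hn),
      Finset.Ico_eq_empty_of_le (by omega : l ≤ n + 1)]

lemma upper_of_le (w : TQubit N nX l → ZMod 2) {n : ℕ} (hn : l ≤ n) : upper w n = 0 := by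
  simp [upper, Finset.Ico_eq_empty_of_le hn]

lemma bridge_zero (w : TQubit N nX l → ZMod 2) : bridge w 0 = 0 :=
  funext fun s => dif_neg (by omega)

lemma bridge_of_le (w : TQubit N nX l → ZMod 2) {n : ℕ} (hn : l ≤ n) : bridge w n = 0 :=
  funext fun s => dif_neg (by omega)

lemma bridge_succ_apply (w : TQubit N nX l → ZMod 2) (s : Fin nX) (k : Fin (l - 1)) :
    bridge w (k + 1) s = w (.inr (s, k)) := by
  rw [bridge, dif_pos (by omega)]
  rfl

lemma sum_bridges_adjacent {M : Type*} [AddCommMonoid M] (F : ℕ → M) (hF : F l = 0) {i : ℕ}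
    (hi : i < l) :
    ∑ k : Fin (l - 1), (if i = k ∨ i = k + 1 then F (k + 1) else 0) =
      F (i + 1) + if i = 0 then 0 else F i := by
  rw [Fin.sum_univ_eq_sum_range (fun k => if i = k ∨ i = k + 1 then F (k + 1) else 0)]
  have hsplit : ∀ k, (if i = k ∨ i = k + 1 then F (k + 1) else 0) =
      (if i = k then F (i + 1) else 0) + if k + 1 = i then F i else 0 := by
    intro k
    by_cases h₁ : i = k <;> by_cases h₂ : k + 1 = i <;> simp [h₁, h₂] <;> omega
  simp only [hsplit, Finset.sum_add_distrib, Finset.sum_ite_eq, Finset.mem_range]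
  congr 1
  · split_ifs with h
    · rfl
    · rw [show i + 1 = l by omega, hF]
  · rcases i with _ | i
    · simp
    · simp [Finset.sum_ite_eq', show i < l - 1 by omega]

variable (HX : Matrix (Fin nX) (Fin N) (ZMod 2)) (HZ : Matrix (Fin nZ) (Fin N) (ZMod 2))
  (κ : Fin nZ → Fin l)

lemma thickHX_mulVec_apply (w : TQubit N nX l → ZMod 2) (s : Fin nX) (i : Fin l) :
    (thickHX HX l *ᵥ w) (s, i) = (HX *ᵥ layer w i) s + (bridge w i s + bridge w (i + 1) s) := by
  have hsum_bridges := sum_bridges_adjacent (fun n => bridge w n s)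
    (congrFun (bridge_of_le w le_rfl) s) i.isLt
  simp only [bridge_succ_apply] at hsum_bridges
  simp only [mulVec, dotProduct, Fintype.sum_sum_type, Fintype.sum_prod_type, thickHX, layer]
  congr 1
  · simp
  · rw [Finset.sum_eq_single s (fun s' _ hs' => by simp [hs']) (by simp)]
    simp only [true_and, ite_mul, one_mul, zero_mul, @eq_comm _ (i : ℕ)] at hsum_bridges ⊢
    rw [hsum_bridges, add_comm]
    split_ifs with hi
    · simp [← hi, bridge_zero]
    · rfl

lemma thickHX_mulVec_embed {v : Fin N → ZMod 2} (hv : HX *ᵥ v = 0) (k : Fin l) :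
    thickHX HX l *ᵥ embed (nX := nX) k v = 0 := by
  have hbridge : ∀ n, bridge (embed (nX := nX) k v) n = 0 := fun n => funext fun s => by
    simp [bridge, embed]
  have hlayer : ∀ i : Fin l, layer (embed (nX := nX) k v) i = if i = k then v else 0 := by
    intro i
    by_cases hi : i = k <;> funext p <;> simp [layer, embed, hi]
  funext ⟨s, i⟩
  rw [thickHX_mulVec_apply, hbridge, hbridge, hlayer]
  split_ifs <;> simp [hv]

lemma thickHZ_inl (R : Fin nZ) : thickHZ HX HZ l κ (.inl R) = embed (κ R) (HZ R) := by
  funext j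
  rcases j with ⟨p, k⟩ | _ <;> rfl

lemma collapse_thickHZ_inr (x : Fin N × Fin (l - 1)) :
    collapse (thickHZ HX HZ l κ (.inr x)) = 0 := by
  obtain ⟨p, k⟩ := x
  funext q
  rw [collapse_apply]
  by_cases hq : q = p
  · have hpair : (Finset.range l).filter (fun n : ℕ => n = k ∨ n = (k : ℕ) + 1) =
        {(k : ℕ), (k : ℕ) + 1} := by
      ext n
      simp only [Finset.mem_filter, Finset.mem_range, Finset.mem_insert, Finset.mem_singleton]
      omega
    simp only [thickHZ, hq, true_and, Pi.zero_apply]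
    rw [Fin.sum_univ_eq_sum_range
        (fun n : ℕ => if n = k ∨ n = (k : ℕ) + 1 then (1 : ZMod 2) else 0),
      Finset.sum_boole, hpair, Finset.card_pair (by omega)]
    rfl
  · simp [thickHZ, hq]

lemma collapse_mem_span {u : TQubit N nX l → ZMod 2}
    (hu : u ∈ Submodule.span (ZMod 2) (Set.range (thickHZ HX HZ l κ))) :
    collapse u ∈ Submodule.span (ZMod 2) (Set.range HZ) := by
  suffices h : Submodule.span (ZMod 2) (Set.range (thickHZ HX HZ l κ)) ≤
      (Submodule.span (ZMod 2) (Set.range HZ)).comap collapse from h hu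
  rw [Submodule.span_le]
  rintro _ ⟨R | x, rfl⟩
  · simpa [thickHZ_inl, collapse_embed] using Submodule.subset_span (Set.mem_range_self R)
  · simp [collapse_thickHZ_inr]

section

variable {w : TQubit N nX l → ZMod 2}

lemma mulVec_layer (hw : thickHX HX l *ᵥ w = 0) (n : ℕ) :
    HX *ᵥ layer w n = bridge w n + bridge w (n + 1) := by
  by_cases hn : n < l
  · funext s
    have hcheck := congrFun hw (s, ⟨n, hn⟩)
    rw [thickHX_mulVec_apply] at hcheck
    exact CharTwo.add_eq_zero.mp hcheck
  · have hlayer : layer w n = 0 := funext fun p => dif_neg hn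
    rw [hlayer, mulVec_zero, bridge_of_le w (by omega), bridge_of_le w (by omega), add_zero]

/-- The checks on the layers `≥ n` telescope. -/
lemma mulVec_upper (hw : thickHX HX l *ᵥ w = 0) (n : ℕ) : HX *ᵥ upper w n = bridge w n := by
  suffices h : ∀ m n, l ≤ n + m → HX *ᵥ upper w n = bridge w n from h l n (by omega)
  intro m
  induction m with
  | zero =>
    intro n hn
    rw [upper_of_le w (by omega), bridge_of_le w (by omega), mulVec_zero]
  | succ m ih =>
    intro n hn
    rw [upper_eq_layer_add, mulVec_add, mulVec_layer HX hw, ih (n + 1) (by omega)]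
    funext s
    exact CharTwo.add_cancel_right _ _

lemma mulVec_collapse (hw : thickHX HX l *ᵥ w = 0) : HX *ᵥ collapse w = 0 := by
  rw [← upper_zero, mulVec_upper HX hw, bridge_zero]

/-- The type (ii) generator of qubit `p` at bridge `k` enters with coefficient
`upper w (k + 1) p`, the sum of `w` over the copies of `p` above that bridge. -/
lemma add_embed_collapse_mem_span (hw : thickHX HX l *ᵥ w = 0) (h0 : 0 < l) :
    w + embed ⟨0, h0⟩ (collapse w) ∈ Submodule.span (ZMod 2) (Set.range (thickHZ HX HZ l κ)) := by
  convert vecMul_mem_span_range (thickHZ HX HZ l κ) (Sum.elim 0 fun x => upper w (x.2 + 1) x.1)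
  funext j
  simp only [vecMul, dotProduct, Fintype.sum_sum_type, Sum.elim_inl,
    Pi.zero_apply, zero_mul, Finset.sum_const_zero, zero_add, Sum.elim_inr, Fintype.sum_prod_type]
  rcases j with ⟨q, j⟩ | ⟨s, k⟩
  · have hsum_bridges := sum_bridges_adjacent (fun n => upper w n q)
      (congrFun (upper_of_le w le_rfl) q) j.isLt
    have hrec := congrFun (upper_eq_layer_add w j) q
    have hlayer : layer w j q = w (.inl (q, j)) := by simp [layer]
    rw [Finset.sum_eq_single q (fun p _ hp => by simp [thickHZ, Ne.symm hp]) (by simp)]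
    simp only [thickHZ, true_and, mul_ite, mul_one, mul_zero] at hsum_bridges ⊢
    rw [hsum_bridges]
    simp only [Pi.add_apply, embed, LinearMap.coe_mk, AddHom.coe_mk] at hrec ⊢
    rw [hlayer] at hrec
    by_cases hj : (j : ℕ) = 0
    · obtain rfl : j = ⟨0, h0⟩ := Fin.ext hj
      rw [upper_zero] at hrec
      simp only [if_true, hrec, CharTwo.add_cancel_left, add_zero]
    · rw [if_neg (fun h => hj (congrArg Fin.val h)), if_neg hj, hrec, add_zero, add_comm,
        CharTwo.add_cancel_right]
  · have hbridge := congrFun (mulVec_upper HX hw (k + 1)) s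
    rw [bridge_succ_apply] at hbridge
    simp [thickHZ, embed, ← hbridge, mulVec, dotProduct, mul_comm, Fin.val_inj]

lemma mem_span_of_collapse_mem (hCSS : HX * HZ.transpose = 0) (h0 : 0 < l)
    (hw : thickHX HX l *ᵥ w = 0)
    (hcol : collapse w ∈ Submodule.span (ZMod 2) (Set.range HZ)) :
    w ∈ Submodule.span (ZMod 2) (Set.range (thickHZ HX HZ l κ)) := by
  have hembed : Submodule.span (ZMod 2) (Set.range HZ) ≤
      (Submodule.span (ZMod 2) (Set.range (thickHZ HX HZ l κ))).comap (embed ⟨0, h0⟩) := by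
    rw [Submodule.span_le]
    rintro _ ⟨R, rfl⟩
    have hR : HX *ᵥ HZ R = 0 := funext fun s => by
      simpa [Matrix.mul_apply, mulVec, dotProduct] using congrFun (congrFun hCSS s) R
    have hsum := add_embed_collapse_mem_span HX HZ κ (thickHX_mulVec_embed HX hR (κ R)) h0
    have hrow : embed (κ R) (HZ R) ∈ Submodule.span (ZMod 2) (Set.range (thickHZ HX HZ l κ)) :=
      thickHZ_inl HX HZ κ R ▸ Submodule.subset_span (Set.mem_range_self _)
    rw [collapse_embed] at hsum
    simpa using Submodule.sub_mem _ hsum hrow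
  simpa using Submodule.sub_mem _ (add_embed_collapse_mem_span HX HZ κ hw h0) (hembed hcol)

end

end Thickening

open Thickening in
theorem stmt9_general (HX : Matrix (Fin nX) (Fin N) (ZMod 2)) (HZ : Matrix (Fin nZ) (Fin N) (ZMod 2))
    (hCSS : HX * HZ.transpose = 0) (l : ℕ) (hl : 2 ≤ l) (κ : Fin nZ → Fin l) :
    distZ (thickHX HX l) (thickHZ HX HZ l κ) = distZ HX HZ := by
  have h0 : 0 < l := by omega
  apply distZ_eq_of_forall_exists
  · intro w hw hspan
    exact ⟨collapse w, mulVec_collapse HX hw,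
      fun h => hspan (mem_span_of_collapse_mem HX HZ κ hCSS h0 hw h), wt_collapse_le w⟩
  · intro v hv hspan
    refine ⟨embed ⟨0, h0⟩ v, thickHX_mulVec_embed HX hv _, fun h => hspan ?_, (wt_embed _ v).le⟩
    simpa [collapse_embed] using collapse_mem_span HX HZ κ h

/-- For a CSS code with `K ≥ 1` and its thickened code with parameter
`l ≥ 2` and any choice function `κ`, the Z-distance is unchanged: `d̃_Z = d_Z`. -/
theorem stmt9 (HX : Matrix (Fin nX) (Fin N) (ZMod 2)) (HZ : Matrix (Fin nZ) (Fin N) (ZMod 2))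
    (hCSS : HX * HZ.transpose = 0) (l : ℕ) (hl : 2 ≤ l) (κ : Fin nZ → Fin l)
    (hK : 1 ≤ N - HX.rank - HZ.rank) :
    distZ (thickHX HX l) (thickHZ HX HZ l κ) = distZ HX HZ :=
  stmt9_general HX HZ hCSS l hl κ
end

section
/- Let C̃ be the thickened code of a CSS code C with parameter l ≥ 2 and any choice function κ. Then C̃ is a CSS code (its generator matrices satisfy H̃_X · H̃_Zᵀ = 0) and its parameters satisfy: ñ_X = l·n_X; ñ_Z = n_Z + (l−1)·N; w̃_X ≤ w_X + 2; w̃_Z ≤ max(w_Z, 2 + q_X); q̃_X ≤ max(q_X, 2); q̃_Z ≤ max(q_Z + 2, w_X); W̃_X ≤ l·(W_X + 2·n_X); and W̃_Z ≤ W_Z + 2·(l−1)·N + (l−1)·W_X. -/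
open Matrix

variable {N nX nZ : ℕ}

lemma wt_eq_sum {α : Type*} [Fintype α] (v : α → ZMod 2) :
    wt v = ∑ j, if v j ≠ 0 then 1 else 0 := by
  simp [wt, Finset.card_filter]

lemma wt_sum_type {A B : Type*} [Fintype A] [Fintype B] (v : A ⊕ B → ZMod 2) :
    wt v = wt (fun a => v (Sum.inl a)) + wt (fun b => v (Sum.inr b)) := by
  simp [wt_eq_sum, Fintype.sum_sum_type]

lemma wt_mono {A : Type*} [Fintype A] {v w : A → ZMod 2}
    (h : ∀ j, v j ≠ 0 → w j ≠ 0) : wt v ≤ wt w := by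
  apply Finset.card_le_card
  intro j hj
  simp only [Finset.mem_filter, Finset.mem_univ, true_and] at *
  exact h j hj

lemma wt_snd_ite {A B : Type*} [Fintype A] [Fintype B] [DecidableEq B]
    (f : A → ZMod 2) (b0 : B) :
    wt (fun x : A × B => if x.2 = b0 then f x.1 else 0) = wt f := by
  simp only [wt_eq_sum, Fintype.sum_prod_type]
  have : ∀ a : A, (∑ b : B, if (if b = b0 then f a else 0) ≠ 0 then 1 else 0)
      = if f a ≠ 0 then 1 else 0 := by
    intro a
    rw [Finset.sum_congr rfl (fun b _ => ?_), Finset.sum_ite_eq' Finset.univ b0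
      (fun _ => if f a ≠ 0 then 1 else 0)]
    · simp
    · by_cases h : b = b0 <;> simp [h]
  rw [Finset.sum_congr rfl (fun a _ => this a)]

lemma wt_le_two {A : Type*} [Fintype A] {v : A → ZMod 2}
    (h : ∀ j j' j'', v j ≠ 0 → v j' ≠ 0 → v j'' ≠ 0 → j = j' ∨ j = j'' ∨ j' = j'') :
    wt v ≤ 2 := by
  by_contra hc
  push_neg at hc
  obtain ⟨a, b, c, ha, hb, hc2, hab, hac, hbc⟩ := Finset.two_lt_card_iff.mp hc
  simp only [Finset.mem_filter, Finset.mem_univ, true_and] at ha hb hc2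
  rcases h a b c ha hb hc2 with h' | h' | h' <;> [exact hab h'; exact hac h'; exact hbc h']

lemma wt_pair_le_two {A B : Type*} [Fintype A] [Fintype B] {v : A × B → ZMod 2} {s : A}
    {g : B → ℕ} {m m' : ℕ} (hg : ∀ b b', g b = g b' → b = b')
    (h : ∀ j, v j ≠ 0 → j.1 = s ∧ (g j.2 = m ∨ g j.2 = m')) : wt v ≤ 2 := by
  apply wt_le_two
  intro j j' j'' hj hj' hj''
  obtain ⟨e1, d1⟩ := h j hj
  obtain ⟨e2, d2⟩ := h j' hj'
  obtain ⟨e3, d3⟩ := h j'' hj''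
  have : g j.2 = g j'.2 ∨ g j.2 = g j''.2 ∨ g j'.2 = g j''.2 := by omega
  rcases this with h' | h' | h'
  · exact Or.inl (Prod.ext (e1.trans e2.symm) (hg _ _ h'))
  · exact Or.inr (Or.inl (Prod.ext (e1.trans e3.symm) (hg _ _ h')))
  · exact Or.inr (Or.inr (Prod.ext (e2.trans e3.symm) (hg _ _ h')))

lemma totW_col {m α : Type*} [Fintype m] [Fintype α] (M : Matrix m α (ZMod 2)) :
    (∑ i, wt (M i)) = ∑ j, wt (fun i => M i j) := by
  simp only [wt_eq_sum]
  exact Finset.sum_comm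
variable {N nX nZ : ℕ}

lemma rowX_wt (HX : Matrix (Fin nX) (Fin N) (ZMod 2)) (l : ℕ) (s : Fin nX) (k : Fin l) :
    wt (thickHX HX l (s, k)) ≤ wt (HX s) + 2 := by
  rw [wt_sum_type]
  have h1 : wt (fun a : Fin N × Fin l => thickHX HX l (s, k) (Sum.inl a)) = wt (HX s) := by
    have : (fun a : Fin N × Fin l => thickHX HX l (s, k) (Sum.inl a))
        = fun x : Fin N × Fin l => if x.2 = k then HX s x.1 else 0 := by
      funext ⟨p, k'⟩; rfl
    rw [this, wt_snd_ite]
  have h2 : wt (fun b : Fin nX × Fin (l-1) => thickHX HX l (s, k) (Sum.inr b)) ≤ 2 := by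
    apply wt_pair_le_two (g := Fin.val) (m := k.val) (m' := k.val - 1)
      (fun b b' h => Fin.ext h)
    rintro ⟨s', k'⟩ hj
    simp only [thickHX, ne_eq, ite_eq_right_iff, one_ne_zero, imp_false, not_not,
      Classical.not_imp] at hj
    refine ⟨hj.1, ?_⟩
    dsimp only
    omega
  omega

lemma rowZ_inl_wt (HX : Matrix (Fin nX) (Fin N) (ZMod 2)) (HZ : Matrix (Fin nZ) (Fin N) (ZMod 2))
    (l : ℕ) (κ : Fin nZ → Fin l) (R : Fin nZ) :
    wt (thickHZ HX HZ l κ (Sum.inl R)) = wt (HZ R) := by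
  rw [wt_sum_type]
  have h2 : wt (fun b : Fin nX × Fin (l-1) => thickHZ HX HZ l κ (Sum.inl R) (Sum.inr b)) = 0 := by
    simp [wt, thickHZ]
  have h1 : (fun a : Fin N × Fin l => thickHZ HX HZ l κ (Sum.inl R) (Sum.inl a))
      = fun x : Fin N × Fin l => if x.2 = κ R then HZ R x.1 else 0 := by
    funext ⟨p, k⟩; rfl
  rw [h1, wt_snd_ite, h2, Nat.add_zero]

lemma rowZ_inr_wt (HX : Matrix (Fin nX) (Fin N) (ZMod 2)) (HZ : Matrix (Fin nZ) (Fin N) (ZMod 2))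
    (l : ℕ) (κ : Fin nZ → Fin l) (p : Fin N) (k0 : Fin (l-1)) :
    wt (thickHZ HX HZ l κ (Sum.inr (p, k0))) ≤ 2 + wt (fun s => HX s p) := by
  rw [wt_sum_type]
  have h1 : wt (fun a : Fin N × Fin l => thickHZ HX HZ l κ (Sum.inr (p, k0)) (Sum.inl a)) ≤ 2 := by
    apply wt_pair_le_two (g := Fin.val) (m := k0.val) (m' := k0.val + 1)
      (fun b b' h => Fin.ext h)
    rintro ⟨p', k'⟩ hj
    simp only [thickHZ, ne_eq, ite_eq_right_iff, one_ne_zero, imp_false, not_not,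
      Classical.not_imp] at hj
    exact ⟨hj.1, hj.2⟩
  have h2 : wt (fun b : Fin nX × Fin (l-1) => thickHZ HX HZ l κ (Sum.inr (p, k0)) (Sum.inr b))
      = wt (fun s => HX s p) := by
    have : (fun b : Fin nX × Fin (l-1) => thickHZ HX HZ l κ (Sum.inr (p, k0)) (Sum.inr b))
        = fun x : Fin nX × Fin (l-1) => if x.2 = k0 then HX x.1 p else 0 := by
      funext ⟨s, k'⟩
      simp only [thickHZ, Fin.val_inj]
    rw [this]
    exact wt_snd_ite (fun a => HX a p) k0
  omega

lemma colX_inl_wt (HX : Matrix (Fin nX) (Fin N) (ZMod 2)) (l : ℕ) (q : Fin N) (k : Fin l) :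
    wt (fun r : Fin nX × Fin l => thickHX HX l r (Sum.inl (q, k))) = wt (fun s => HX s q) := by
  have : (fun r : Fin nX × Fin l => thickHX HX l r (Sum.inl (q, k)))
      = fun x : Fin nX × Fin l => if x.2 = k then HX x.1 q else 0 := by
    funext ⟨s, k'⟩
    simp only [thickHX]
    exact if_congr eq_comm rfl rfl
  rw [this]
  exact wt_snd_ite (fun a => HX a q) k

lemma colX_inr_wt (HX : Matrix (Fin nX) (Fin N) (ZMod 2)) (l : ℕ) (s0 : Fin nX)
    (k' : Fin (l-1)) :
    wt (fun r : Fin nX × Fin l => thickHX HX l r (Sum.inr (s0, k'))) ≤ 2 := by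
  apply wt_pair_le_two (g := Fin.val) (m := k'.val) (m' := k'.val + 1)
    (fun b b' h => Fin.ext h)
  rintro ⟨s, k⟩ hj
  simp only [thickHX, ne_eq, ite_eq_right_iff, one_ne_zero, imp_false, not_not,
    Classical.not_imp] at hj
  refine ⟨hj.1.symm, ?_⟩
  dsimp only
  omega

lemma colZ_inl_wt (HX : Matrix (Fin nX) (Fin N) (ZMod 2)) (HZ : Matrix (Fin nZ) (Fin N) (ZMod 2))
    (l : ℕ) (κ : Fin nZ → Fin l) (q : Fin N) (k : Fin l) :
    wt (fun r : TZIdx N nZ l => thickHZ HX HZ l κ r (Sum.inl (q, k)))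
      ≤ wt (fun R => HZ R q) + 2 := by
  rw [wt_sum_type]
  have h1 : wt (fun R : Fin nZ => thickHZ HX HZ l κ (Sum.inl R) (Sum.inl (q, k)))
      ≤ wt (fun R => HZ R q) := by
    apply wt_mono
    intro R hR
    simp only [thickHZ, ne_eq, ite_eq_right_iff, Classical.not_imp] at hR
    exact hR.2
  have h2 : wt (fun b : Fin N × Fin (l-1) => thickHZ HX HZ l κ (Sum.inr b) (Sum.inl (q, k)))
      ≤ 2 := by
    apply wt_pair_le_two (g := Fin.val) (m := k.val) (m' := k.val - 1)
      (fun b b' h => Fin.ext h)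
    rintro ⟨p, k0⟩ hj
    simp only [thickHZ, ne_eq, ite_eq_right_iff, one_ne_zero, imp_false, not_not,
      Classical.not_imp] at hj
    refine ⟨hj.1.symm, ?_⟩
    dsimp only
    omega
  omega

lemma colZ_inr_wt (HX : Matrix (Fin nX) (Fin N) (ZMod 2)) (HZ : Matrix (Fin nZ) (Fin N) (ZMod 2))
    (l : ℕ) (κ : Fin nZ → Fin l) (s : Fin nX) (k' : Fin (l-1)) :
    wt (fun r : TZIdx N nZ l => thickHZ HX HZ l κ r (Sum.inr (s, k'))) = wt (HX s) := by
  rw [wt_sum_type]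
  have h1 : wt (fun R : Fin nZ => thickHZ HX HZ l κ (Sum.inl R) (Sum.inr (s, k'))) = 0 := by
    simp [wt, thickHZ]
  have h2 : (fun b : Fin N × Fin (l-1) => thickHZ HX HZ l κ (Sum.inr b) (Sum.inr (s, k')))
      = fun x : Fin N × Fin (l-1) => if x.2 = k' then HX s x.1 else 0 := by
    funext ⟨p, k0⟩
    simp only [thickHZ, Fin.val_inj]
    exact if_congr eq_comm rfl rfl
  rw [h1, h2, Nat.zero_add]
  exact wt_snd_ite (fun a => HX s a) k'

lemma addself (x : ZMod 2) : x + x = 0 := by revert x; decide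

/-- The thickened code (with any `l ≥ 2`, any choice function `κ`) is a
CSS code, `H̃_X · H̃_Zᵀ = 0`, with parameters: `ñ_X = l·n_X`; `ñ_Z = n_Z + (l−1)·N`;
`w̃_X ≤ w_X + 2`; `w̃_Z ≤ max(w_Z, 2 + q_X)`; `q̃_X ≤ max(q_X, 2)`;
`q̃_Z ≤ max(q_Z + 2, w_X)`; `W̃_X ≤ l·(W_X + 2·n_X)`; and
`W̃_Z ≤ W_Z + 2·(l−1)·N + (l−1)·W_X`. -/
theorem stmt10 (HX : Matrix (Fin nX) (Fin N) (ZMod 2)) (HZ : Matrix (Fin nZ) (Fin N) (ZMod 2))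
    (hCSS : HX * HZ.transpose = 0) (l : ℕ) (hl : 2 ≤ l) (κ : Fin nZ → Fin l) :
    thickHX HX l * (thickHZ HX HZ l κ).transpose = 0 ∧
    Fintype.card (Fin nX × Fin l) = l * nX ∧
    Fintype.card (TZIdx N nZ l) = nZ + (l - 1) * N ∧
    (∀ r, wt (thickHX HX l r) ≤ maxRowW HX + 2) ∧
    (∀ r, wt (thickHZ HX HZ l κ r) ≤ max (maxRowW HZ) (2 + maxColW HX)) ∧
    (∀ p, wt (fun r => thickHX HX l r p) ≤ max (maxColW HX) 2) ∧
    (∀ p, wt (fun r => thickHZ HX HZ l κ r p) ≤ max (maxColW HZ + 2) (maxRowW HX)) ∧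
    totW (thickHX HX l) ≤ l * (totW HX + 2 * nX) ∧
    totW (thickHZ HX HZ l κ) ≤ totW HZ + 2 * (l - 1) * N + (l - 1) * totW HX := by
  refine ⟨?_, ?_, ?_, ?_, ?_, ?_, ?_, ?_, ?_⟩
  · -- orthogonality
    ext ⟨s, k⟩ r
    rw [Matrix.mul_apply]
    simp only [Matrix.transpose_apply, Matrix.zero_apply]
    rw [Fintype.sum_sum_type]
    cases r with
    | inl R =>
      have h2 : ∑ b : Fin nX × Fin (l-1),
          thickHX HX l (s,k) (Sum.inr b) * thickHZ HX HZ l κ (Sum.inl R) (Sum.inr b) = 0 := by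
        simp [thickHZ]
      rw [h2, add_zero]
      have h0 : ∑ p, HX s p * HZ R p = 0 := by
        have := congrFun (congrFun hCSS s) R
        simpa [Matrix.mul_apply] using this
      rw [Fintype.sum_prod_type]
      have e : ∀ (p : Fin N) (k' : Fin l),
          thickHX HX l (s,k) (Sum.inl (p,k')) * thickHZ HX HZ l κ (Sum.inl R) (Sum.inl (p,k'))
          = if k' = k then (if k = κ R then HX s p * HZ R p else 0) else 0 := by
        intro p k'
        simp only [thickHX, thickHZ]
        by_cases h1 : k' = k
        · subst h1; by_cases hh : k' = κ R <;> simp [hh]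
        · simp [h1]
      rw [Finset.sum_congr rfl (fun p _ => Finset.sum_congr rfl (fun k' _ => e p k'))]
      by_cases hk : k = κ R <;> simp [hk, Finset.sum_ite_eq', h0]
    | inr z =>
      obtain ⟨p0, k0⟩ := z
      have eA : ∀ (p : Fin N) (k' : Fin l),
          thickHX HX l (s,k) (Sum.inl (p,k')) * thickHZ HX HZ l κ (Sum.inr (p0,k0)) (Sum.inl (p,k'))
          = if k' = k then (if p = p0 then
              (if (k.val = k0.val ∨ k.val = k0.val + 1) then HX s p0 else 0) else 0) else 0 := by
        intro p k'
        by_cases h1 : k' = k <;> by_cases h2 : p = p0 <;>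
          simp [thickHX, thickHZ, h1, h2]
      have eB : ∀ (s' : Fin nX) (k' : Fin (l-1)),
          thickHX HX l (s,k) (Sum.inr (s',k')) * thickHZ HX HZ l κ (Sum.inr (p0,k0)) (Sum.inr (s',k'))
          = if k' = k0 then (if s' = s then
              (if (k0.val = k.val ∨ k0.val + 1 = k.val) then HX s p0 else 0) else 0) else 0 := by
        intro s' k'
        by_cases h1 : k' = k0 <;> by_cases h2 : s' = s <;>
          simp [thickHX, thickHZ, h1, h2, Fin.val_inj]
      rw [Fintype.sum_prod_type, Fintype.sum_prod_type,
        Finset.sum_congr rfl (fun p _ => Finset.sum_congr rfl (fun k' _ => eA p k')),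
        Finset.sum_congr rfl (fun s' _ => Finset.sum_congr rfl (fun k' _ => eB s' k'))]
      have hiff : (k.val = k0.val ∨ k.val = k0.val + 1) ↔ (k0.val = k.val ∨ k0.val + 1 = k.val) := by
        omega
      simp only [Finset.sum_ite_eq', Finset.mem_univ, if_true, Finset.sum_ite_eq,
        Finset.sum_const_zero]
      rw [if_congr hiff rfl rfl]
      split_ifs with h
      · exact addself _
      · exact add_zero 0
  · simp [mul_comm]
  · simp [mul_comm]
  · rintro ⟨s, k⟩
    have h1 := rowX_wt HX l s k
    have h2 : wt (HX s) ≤ maxRowW HX := Finset.le_sup (f := fun i => wt (HX i)) (Finset.mem_univ s)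
    omega
  · rintro (R | ⟨p, k0⟩)
    · rw [rowZ_inl_wt]
      exact le_max_of_le_left (Finset.le_sup (f := fun i => wt (HZ i)) (Finset.mem_univ R))
    · refine le_trans (rowZ_inr_wt HX HZ l κ p k0) (le_max_of_le_right ?_)
      have : wt (fun s => HX s p) ≤ maxColW HX :=
        Finset.le_sup (f := fun j => wt fun i => HX i j) (Finset.mem_univ p)
      omega
  · rintro (⟨q, k⟩ | ⟨s0, k'⟩)
    · rw [colX_inl_wt]
      exact le_max_of_le_left (Finset.le_sup (f := fun j => wt fun i => HX i j) (Finset.mem_univ q))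
    · exact le_max_of_le_right (colX_inr_wt HX l s0 k')
  · rintro (⟨q, k⟩ | ⟨s, k'⟩)
    · refine le_trans (colZ_inl_wt HX HZ l κ q k) (le_max_of_le_left ?_)
      have : wt (fun R => HZ R q) ≤ maxColW HZ :=
        Finset.le_sup (f := fun j => wt fun i => HZ i j) (Finset.mem_univ q)
      omega
    · rw [colZ_inr_wt]
      exact le_max_of_le_right (Finset.le_sup (f := fun i => wt (HX i)) (Finset.mem_univ s))
  · calc totW (thickHX HX l) ≤ ∑ x : Fin nX × Fin l, (wt (HX x.1) + 2) :=
          Finset.sum_le_sum (fun x _ => by obtain ⟨s, k⟩ := x; exact rowX_wt HX l s k)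
      _ = l * (totW HX + 2 * nX) := by
          rw [Fintype.sum_prod_type]
          simp only [Finset.sum_const, Finset.card_univ, Fintype.card_fin, smul_eq_mul,
            mul_add, Finset.sum_add_distrib]
          rw [totW, ← Finset.mul_sum]
          ring
  · rw [totW, Fintype.sum_sum_type]
    have h1 : ∑ R : Fin nZ, wt (thickHZ HX HZ l κ (Sum.inl R)) = totW HZ := by
      rw [totW]
      exact Finset.sum_congr rfl (fun R _ => rowZ_inl_wt HX HZ l κ R)
    have h2 : ∑ b : Fin N × Fin (l-1), wt (thickHZ HX HZ l κ (Sum.inr b))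
        ≤ 2 * (l - 1) * N + (l - 1) * totW HX := by
      calc ∑ b : Fin N × Fin (l-1), wt (thickHZ HX HZ l κ (Sum.inr b))
          ≤ ∑ b : Fin N × Fin (l-1), (2 + wt (fun s => HX s b.1)) :=
            Finset.sum_le_sum (fun b _ => by obtain ⟨p, k0⟩ := b; exact rowZ_inr_wt HX HZ l κ p k0)
        _ = 2 * (l - 1) * N + (l - 1) * totW HX := by
            have hc : ∑ j : Fin N, wt (fun i => HX i j) = totW HX := (totW_col HX).symm
            rw [Fintype.sum_prod_type]
            simp only [Finset.sum_const, Finset.card_univ, Fintype.card_fin, smul_eq_mul,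
              mul_add, Finset.sum_add_distrib]
            rw [← Finset.mul_sum, hc]
            ring
    omega
end
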